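/- Let V be a semi-reflexive locally convex space with a continuous inner product, V̄ its Hilbert completion, and ι : V → V̄ the canonical dense embedding. Then the dual map ι* : V̄* → V* is injective with weak-* dense image, and composing with the Riesz isomorphism V̄* ≅ V̄ yields a continuous injective map V̄ → V* with weak-* dense image — i.e., an orthogonal structure on V yields a co-orthogonal structure on V*. -/

import Mathlib

open RealInnerProductSpace

/-- Let `V` be a semi-reflexive locally convex space with a continuous
inner product `B`, `V̄ = H` its Hilbert completion with canonical dense embedding
`ι : V → H` (so `⟪ι v, ι u⟫ = B v u`).  Then the dual map `ι* : V̄* → V*` is injective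
with weak-* dense image, and composing with the Riesz isomorphism `V̄* ≅ V̄` yields a
continuous injective linear map `V̄ → V*`, `h ↦ (v ↦ ⟪h, ι v⟫)`, with weak-* dense
image: an orthogonal structure on `V` yields a co-orthogonal structure on `V*`. -/
theorem orthogonal_gives_coOrthogonal_on_dual
    {V H : Type*}
    [AddCommGroup V] [Module ℝ V] [TopologicalSpace V] [IsTopologicalAddGroup V]
    [ContinuousSMul ℝ V] [LocallyConvexSpace ℝ V]
    [NormedAddCommGroup H] [InnerProductSpace ℝ H] [CompleteSpace H]
    (hrefl : ∀ g : WeakDual ℝ V →L[ℝ] ℝ, ∃ v : V, ∀ f : WeakDual ℝ V, g f = f v)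
    (B : V →ₗ[ℝ] V →ₗ[ℝ] ℝ) (hBcont : Continuous fun p : V × V => B p.1 p.2)
    (ι : V →L[ℝ] H) (hinj : Function.Injective ι) (hdense : DenseRange ι)
    (hcompat : ∀ v u : V, ⟪ι v, ι u⟫ = B v u) :
    ∃ Φ : H →ₗ[ℝ] WeakDual ℝ V,
      (∀ (h : H) (v : V), Φ h v = ⟪h, ι v⟫) ∧
      Function.Injective Φ ∧
      Continuous Φ ∧
      DenseRange Φ := by
  classical
  set Φ : H →ₗ[ℝ] WeakDual ℝ V :=
    { toFun := fun h => ((innerSL ℝ h).comp ι : V →L[ℝ] ℝ)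
      map_add' := by
        intro x y
        refine DFunLike.ext _ _ fun v => ?_
        simp [inner_add_left]
        rfl
      map_smul' := by
        intro c x
        refine DFunLike.ext _ _ fun v => ?_
        simp [inner_smul_left]
        rfl } with hΦ
  have hΦapp : ∀ (h : H) (v : V), Φ h v = ⟪h, ι v⟫ := fun h v => rfl
  refine ⟨Φ, hΦapp, ?_, ?_, ?_⟩
  · -- injective
    intro h₁ h₂ he
    have key : ∀ x : H, ⟪h₁ - h₂, x⟫ = 0 := by
      have : Set.EqOn (fun x : H => ⟪h₁ - h₂, x⟫) (fun _ => (0 : ℝ)) (Set.range ι) := by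
        rintro _ ⟨v, rfl⟩
        have : Φ h₁ v = Φ h₂ v := by rw [he]
        simp only [hΦapp] at this
        simp [inner_sub_left, this]
      have := Continuous.ext_on hdense
        (Continuous.inner continuous_const continuous_id : Continuous fun x : H => ⟪h₁ - h₂, x⟫)
        continuous_const this
      exact fun x => congrFun this x
    have : h₁ - h₂ = 0 := by
      have := key (h₁ - h₂)
      exact inner_self_eq_zero.mp this
    exact sub_eq_zero.mp this
  · -- continuous
    exact WeakDual.continuous_of_continuous_eval fun v =>
      (Continuous.inner continuous_id continuous_const)
  · -- dense range
    haveI : LocallyConvexSpace ℝ (WeakDual ℝ V) := WeakBilin.locallyConvexSpace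
    by_contra hnd
    rw [denseRange_iff_closure_range, ← Ne, ← Set.nonempty_compl] at hnd
    obtain ⟨x, hx⟩ := hnd
    have hclosed : IsClosed ((LinearMap.range Φ).topologicalClosure : Set (WeakDual ℝ V)) :=
      isClosed_closure
    have hconv : Convex ℝ ((LinearMap.range Φ).topologicalClosure : Set (WeakDual ℝ V)) :=
      (LinearMap.range Φ).topologicalClosure.convex
    have hxmem : x ∉ ((LinearMap.range Φ).topologicalClosure : Set (WeakDual ℝ V)) := hx
    obtain ⟨f, u, hfx, hfb⟩ := geometric_hahn_banach_point_closed hconv hclosed hxmem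
    have hu0 : u < 0 := by
      have := hfb 0 (Submodule.zero_mem _)
      simpa using this
    have hker : ∀ y ∈ LinearMap.range Φ, f y = 0 := by
      intro y hy
      by_contra hfy
      have hmem : (u / f y) • y ∈ ((LinearMap.range Φ).topologicalClosure : Set (WeakDual ℝ V)) :=
        Submodule.le_topologicalClosure _ (Submodule.smul_mem _ _ hy)
      have := hfb _ hmem
      rw [map_smul, smul_eq_mul, div_mul_cancel₀ _ hfy] at this
      exact lt_irrefl u this
    obtain ⟨v, hv⟩ := hrefl f
    have hv0 : ι v = 0 := by
      have h1 : ∀ h : H, ⟪h, ι v⟫ = 0 := by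
        intro h
        have := hker (Φ h) ⟨h, rfl⟩
        rw [hv (Φ h)] at this
        rw [← hΦapp h v]
        exact this
      have := h1 (ι v)
      exact inner_self_eq_zero.mp this
    have hv0' : v = 0 := hinj (by simpa using hv0)
    have : f x = 0 := by
      rw [hv x, hv0']
      simp
    linarith [hfx, hu0, this ▸ hfx]
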